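/- Let λ ∈ V be a dominant weight, w ∈ W, and fix an index 1 ≤ i ≤ r such that ℓ(s_i w) = ℓ(w) − 1. Suppose μ' ∈ P_λ^w is maximal in the α_i-direction, i.e., for every k ∈ ℚ, μ' + k α_i ∈ P_λ^w implies k ≤ 0. Then μ' ∈ P_λ^{s_i w}; consequently, max((μ' + ℚα_i) ∩ P_λ^w) = μ' = max((μ' + ℚα_i) ∩ P_λ^{s_i w}), where the maxima are taken along the line μ' + ℚα_i. -/

import Mathlib

open scoped Classical

/-- Data of a root system with a fixed choice of simple roots: an ambient
`ℚ`-vector space `V`, a set of roots `Φ` with a distinguished subset `pos` of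
positive roots, a coroot functional `coroot β = ⟨·, β^∨⟩` for each root, and
simple roots `α 1, …, α r`. -/
structure RootData where
  r : ℕ
  V : Type
  [grp : AddCommGroup V]
  [mod : Module ℚ V]
  Φ : Set V
  pos : Set V
  coroot : V → Module.Dual ℚ V
  α : Fin r → V

attribute [instance] RootData.grp RootData.mod

namespace RootData

variable (R : RootData)

/-- The group of linear automorphisms of `V`, in which the Weyl group lives. -/
abbrev Aut : Type := R.V ≃ₗ[ℚ] R.V

/-- The linear map `v ↦ v - ⟨v, β^∨⟩ β`. -/
noncomputable def reflMap (β : R.V) : R.V →ₗ[ℚ] R.V :=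
  LinearMap.id - (R.coroot β).smulRight β

/-- The reflection `s_β` associated to a root `β`, as a linear automorphism. -/
noncomputable def s (β : R.V) : R.Aut :=
  if h : (R.reflMap β).comp (R.reflMap β) = LinearMap.id then
    LinearEquiv.ofLinear (R.reflMap β) (R.reflMap β) h h
  else LinearEquiv.refl ℚ R.V

/-- The simple reflections `s_i := s_{α_i}`. -/
noncomputable def S (i : Fin R.r) : R.Aut := R.s (R.α i)

/-- The Weyl group `W`, generated by the simple reflections. -/
noncomputable def weylGroup : Subgroup R.Aut := Subgroup.closure (Set.range R.S)

/-- The product `s_{i_1} ⋯ s_{i_k}` of a word in the simple reflections. -/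
noncomputable def wordProd (l : List (Fin R.r)) : R.Aut := (l.map R.S).prod

/-- The length function on `W`: least length of a word in the simple
reflections expressing the given element. -/
noncomputable def len (w : R.Aut) : ℕ :=
  sInf {n | ∃ l : List (Fin R.r), l.length = n ∧ R.wordProd l = w}

/-- A word is reduced if its length equals the length of its product. -/
def Reduced (l : List (Fin R.r)) : Prop := R.len (R.wordProd l) = l.length

/-- The Bruhat order on `W`: `u ≤ w` iff some reduced word for `w` has a
subword whose product is `u`. -/
def BruhatLE (u w : R.Aut) : Prop :=
  ∃ l : List (Fin R.r), R.Reduced l ∧ R.wordProd l = w ∧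
    ∃ l' : List (Fin R.r), l'.Sublist l ∧ R.wordProd l' = u

/-- Strict Bruhat order. -/
def BruhatLT (u w : R.Aut) : Prop := R.BruhatLE u w ∧ u ≠ w

/-- One step of the Demazure product: `s_i * w := max {w, s_i w}`. -/
noncomputable def dmulStep (i : Fin R.r) (x : R.Aut) : R.Aut :=
  if R.len x < R.len (R.S i * x) then R.S i * x else x

/-- Demazure product of a word in the simple reflections against `w`:
`s_{i_1} * (s_{i_2} * (⋯ * (s_{i_k} * w)))`. -/
noncomputable def dmulList (l : List (Fin R.r)) (w : R.Aut) : R.Aut :=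
  l.foldr R.dmulStep w

/-- The Demazure product `v * w` on the Weyl group, computed by choosing a
reduced word for `v` (it is independent of this choice). -/
noncomputable def dmul (v w : R.Aut) : R.Aut :=
  if h : ∃ l : List (Fin R.r), R.Reduced l ∧ R.wordProd l = v then
    R.dmulList h.choose w
  else v * w

/-- The parabolic subgroup `W_{P_i}` generated by the simple reflections
`s_j`, `j ≠ i`. -/
noncomputable def WPar (i : Fin R.r) : Subgroup R.Aut :=
  Subgroup.closure (R.S '' {j | j ≠ i})

/-- `W^{P_i}`: the set of minimal-length representatives of cosets of
`W/W_{P_i}`. -/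
def minReps (i : Fin R.r) : Set R.Aut :=
  {v | v ∈ R.weylGroup ∧ ∀ p ∈ R.WPar i, R.len v ≤ R.len (v * p)}

/-- `u` is the minimal-length representative of the coset `w W_{P_i}`. -/
def IsMinRep (i : Fin R.r) (u w : R.Aut) : Prop :=
  u ∈ R.minReps i ∧ u⁻¹ * w ∈ R.WPar i

/-- A weight is dominant if it pairs nonnegatively with every simple coroot. -/
def Dominant (lam : R.V) : Prop := ∀ i : Fin R.r, 0 ≤ R.coroot (R.α i) lam

/-- The dual action of the Weyl group on `V* `: `(u f)(v) = f(u⁻¹ v)`. -/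
noncomputable def dualAct (u : R.Aut) (f : Module.Dual ℚ R.V) : Module.Dual ℚ R.V :=
  f.comp (u.symm : R.V →ₗ[ℚ] R.V)

/-- The Demazure polytope `P_λ^w := conv {uλ : u ∈ W, u ≤ w}`. -/
noncomputable def demPolytope (lam : R.V) (w : R.Aut) : Set R.V :=
  convexHull ℚ {m | ∃ u : R.Aut, u ∈ R.weylGroup ∧ R.BruhatLE u w ∧ m = u lam}

/-- Membership in the weight lattice `X`. -/
def IsWeight (lam : R.V) : Prop := ∀ β ∈ R.Φ, ∃ m : ℤ, R.coroot β lam = (m : ℚ)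

/-- The root lattice `Q = ℤΦ`. -/
noncomputable def rootLattice : AddSubgroup R.V := AddSubgroup.closure R.Φ

/-- `w₀` is the longest element of the Weyl group. -/
def IsLongest (w₀ : R.Aut) : Prop :=
  w₀ ∈ R.weylGroup ∧ ∀ g ∈ R.weylGroup, R.len g ≤ R.len w₀

/-- The positive roots `Φ_{P_i}⁺ = Φ⁺ ∩ span {α_j : j ≠ i}` of the standard
Levi subsystem. -/
def parPos (i : Fin R.r) : Set R.V :=
  {η | η ∈ R.pos ∧ η ∈ Submodule.span ℚ (R.α '' {j | j ≠ i})}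

/-- The value `D_i (e^λ)` of the Demazure operator on a basis element of the
group ring `ℤ[X]`. -/
noncomputable def demOnBasis (i : Fin R.r) (lam : R.V) : R.V →₀ ℤ :=
  if 0 ≤ ⌊R.coroot (R.α i) lam⌋ then
    ∑ k ∈ Finset.range (⌊R.coroot (R.α i) lam⌋.toNat + 1),
      Finsupp.single (lam - (k : ℚ) • R.α i) 1
  else if ⌊R.coroot (R.α i) lam⌋ = -1 then 0
  else - ∑ k ∈ Finset.range ((-⌊R.coroot (R.α i) lam⌋).toNat - 1),
      Finsupp.single (lam + ((k : ℚ) + 1) • R.α i) 1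

/-- The Demazure operator `D_i`, as a `ℤ`-linear endomorphism of the group
ring `ℤ[X]` (realized as finitely supported functions `V →₀ ℤ`). -/
noncomputable def demOp (i : Fin R.r) : (R.V →₀ ℤ) →ₗ[ℤ] (R.V →₀ ℤ) :=
  Finsupp.lsum ℤ fun lam => LinearMap.toSpanSingleton ℤ (R.V →₀ ℤ) (R.demOnBasis i lam)

/-- The Demazure character `D_{i_1} ⋯ D_{i_k} (e^λ)`. -/
noncomputable def demChar (l : List (Fin R.r)) (lam : R.V) : R.V →₀ ℤ :=
  l.foldr (fun i p => R.demOp i p) (Finsupp.single lam 1)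

/-- The axioms of a finite crystallographic root system spanning `V`, with
simple roots `α_i` and positive roots `pos`. -/
structure IsRootSystem (R : RootData) : Prop where
  finite : R.Φ.Finite
  span_top : Submodule.span ℚ R.Φ = ⊤
  ne_zero : ∀ β ∈ R.Φ, β ≠ 0
  coroot_self : ∀ β ∈ R.Φ, R.coroot β β = 2
  crystallographic : ∀ β ∈ R.Φ, ∀ γ ∈ R.Φ, ∃ m : ℤ, R.coroot β γ = (m : ℚ)
  reflection_stable : ∀ β ∈ R.Φ, ∀ γ ∈ R.Φ, γ - R.coroot β γ • β ∈ R.Φ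
  simple_mem : ∀ i, R.α i ∈ R.Φ
  indep : LinearIndependent ℚ R.α
  pos_subset : R.pos ⊆ R.Φ
  pos_or_neg : ∀ β ∈ R.Φ, (β ∈ R.pos ∧ -β ∉ R.pos) ∨ (β ∉ R.pos ∧ -β ∈ R.pos)
  simple_pos : ∀ i, R.α i ∈ R.pos
  pos_nonneg_comb : ∀ β ∈ R.pos, ∃ c : Fin R.r → ℚ, (∀ i, 0 ≤ c i) ∧ β = ∑ i, c i • R.α i

end RootData


/-!
Every vertex `u λ` (`u ≤ w`) of `P_λ^w` lies in the convex set `P_λ^{s_i w} - ℚ≥0 α_i`: either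
`u ≤ s_i w`, or `u = s_i v` with `v ≤ s_i w` and `v⁻¹ α_i > 0`, and then
`u λ = v λ - ⟨v λ, α_i^∨⟩ α_i` with `⟨v λ, α_i^∨⟩ ≥ 0` because `λ` is dominant (computed with a
`W`-invariant inner product). Hence `μ' = p - c α_i` with `p ∈ P_λ^{s_i w} ⊆ P_λ^w` and `c ≥ 0`,
and maximality of `μ'` forces `c = 0`.

The dichotomy for `u` needs `u` to be a subword of the particular reduced word `s_i · (s_i w)` of
`w`. This comes from identifying the subword order with the order generated by the Bruhat graph,
whose steps are controlled by the strong exchange condition.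
-/

theorem Convex.sub_ray {𝕜 E : Type*} [Field 𝕜] [LinearOrder 𝕜] [IsStrictOrderedRing 𝕜]
    [AddCommGroup E] [Module 𝕜 E] {s : Set E} (hs : Convex 𝕜 s) (a : E) :
    Convex 𝕜 {x | ∃ p ∈ s, ∃ c : 𝕜, 0 ≤ c ∧ x = p - c • a} := by
  rintro _ ⟨p, hp, c, hc, rfl⟩ _ ⟨q, hq, d, hd, rfl⟩ t₁ t₂ ht₁ ht₂ ht
  refine ⟨t₁ • p + t₂ • q, hs hp hq ht₁ ht₂ ht, t₁ * c + t₂ * d, by positivity, ?_⟩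
  simp only [smul_sub, smul_smul]
  module

namespace RootData

variable {R : RootData}

theorem s_apply {β : R.V} (h2 : R.coroot β β = 2) (x : R.V) :
    R.s β x = x - R.coroot β x • β := by
  have hinv : (R.reflMap β).comp (R.reflMap β) = LinearMap.id := by
    ext x
    simp only [reflMap, LinearMap.comp_apply, LinearMap.sub_apply, LinearMap.id_apply,
      LinearMap.smulRight_apply, map_sub, map_smul, h2]
    module
  rw [s, dif_pos hinv]
  rfl

theorem S_mem_weylGroup (i : Fin R.r) : R.S i ∈ R.weylGroup :=
  Subgroup.subset_closure ⟨i, rfl⟩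

theorem wordProd_nil : R.wordProd [] = 1 := rfl

theorem wordProd_cons (j : Fin R.r) (l : List (Fin R.r)) :
    R.wordProd (j :: l) = R.S j * R.wordProd l := by
  simp [wordProd]

theorem wordProd_append (l m : List (Fin R.r)) :
    R.wordProd (l ++ m) = R.wordProd l * R.wordProd m := by
  simp [wordProd]

theorem wordProd_mem_weylGroup (l : List (Fin R.r)) : R.wordProd l ∈ R.weylGroup := by
  induction l with
  | nil => exact one_mem _
  | cons j l ih => rw [wordProd_cons]; exact mul_mem (S_mem_weylGroup j) ih

theorem len_wordProd_le (l : List (Fin R.r)) : R.len (R.wordProd l) ≤ l.length :=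
  Nat.sInf_le ⟨l, rfl, rfl⟩

theorem reduced_nil : R.Reduced [] :=
  Nat.le_zero.mp (len_wordProd_le [])

section RootSystem

variable (hR : R.IsRootSystem)
include hR

theorem root_s_apply {β : R.V} (hβ : β ∈ R.Φ) (x : R.V) :
    R.s β x = x - R.coroot β x • β :=
  s_apply (hR.coroot_self β hβ) x

theorem s_apply_self {β : R.V} (hβ : β ∈ R.Φ) : R.s β β = -β := by
  rw [root_s_apply hR hβ, hR.coroot_self β hβ]
  module

theorem s_mul_self {β : R.V} (hβ : β ∈ R.Φ) : R.s β * R.s β = 1 := by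
  ext x
  simp only [LinearEquiv.mul_apply, root_s_apply hR hβ, map_sub, map_smul, smul_eq_mul,
    hR.coroot_self β hβ, LinearEquiv.coe_one, id_eq]
  module

theorem s_apply_mem {β γ : R.V} (hβ : β ∈ R.Φ) (hγ : γ ∈ R.Φ) : R.s β γ ∈ R.Φ := by
  rw [root_s_apply hR hβ]
  exact hR.reflection_stable β hβ γ hγ

theorem S_apply (i : Fin R.r) (x : R.V) :
    R.S i x = x - R.coroot (R.α i) x • R.α i :=
  root_s_apply hR (hR.simple_mem i) x

theorem s_inv {β : R.V} (hβ : β ∈ R.Φ) : (R.s β)⁻¹ = R.s β :=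
  inv_eq_of_mul_eq_one_right (s_mul_self hR hβ)

theorem S_mul_self (i : Fin R.r) : R.S i * R.S i = 1 :=
  s_mul_self hR (hR.simple_mem i)

theorem S_inv (i : Fin R.r) : (R.S i)⁻¹ = R.S i :=
  s_inv hR (hR.simple_mem i)

theorem S_mul_S_mul (i : Fin R.r) (x : R.Aut) : R.S i * (R.S i * x) = x := by
  rw [← mul_assoc, S_mul_self hR, one_mul]

theorem wordProd_reverse (l : List (Fin R.r)) :
    R.wordProd l.reverse = (R.wordProd l)⁻¹ := by
  induction l with
  | nil => simp [wordProd_nil]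
  | cons j l ih =>
    rw [List.reverse_cons, wordProd_append, ih, wordProd_cons j l, mul_inv_rev, S_inv hR,
      wordProd_cons, wordProd_nil, mul_one]

theorem exists_wordProd_eq {w : R.Aut} (hw : w ∈ R.weylGroup) :
    ∃ l, R.wordProd l = w := by
  induction hw using Subgroup.closure_induction with
  | mem x hx =>
    obtain ⟨i, rfl⟩ := hx
    exact ⟨[i], by rw [wordProd_cons, wordProd_nil, mul_one]⟩
  | one => exact ⟨[], rfl⟩
  | mul x y _ _ hx hy =>
    obtain ⟨l, rfl⟩ := hx
    obtain ⟨m, rfl⟩ := hy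
    exact ⟨l ++ m, wordProd_append l m⟩
  | inv x _ hx =>
    obtain ⟨l, rfl⟩ := hx
    exact ⟨l.reverse, wordProd_reverse hR l⟩

theorem exists_reduced {w : R.Aut} (hw : w ∈ R.weylGroup) :
    ∃ l, R.Reduced l ∧ R.wordProd l = w := by
  obtain ⟨l, hl⟩ := exists_wordProd_eq hR hw
  obtain ⟨m, hm, rfl⟩ :=
    Nat.sInf_mem (s := {n | ∃ l : List (Fin R.r), l.length = n ∧ R.wordProd l = w})
      ⟨l.length, l, rfl, hl⟩
  exact ⟨m, hm.symm, rfl⟩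

theorem len_S_mul_le {w : R.Aut} (hw : w ∈ R.weylGroup) (j : Fin R.r) :
    R.len (R.S j * w) ≤ R.len w + 1 := by
  obtain ⟨l, hl, rfl⟩ := exists_reduced hR hw
  rw [← wordProd_cons, hl]
  exact len_wordProd_le (j :: l)

theorem weylGroup_apply_mem {g : R.Aut} (hg : g ∈ R.weylGroup) {β : R.V} (hβ : β ∈ R.Φ) :
    g β ∈ R.Φ := by
  obtain ⟨l, rfl⟩ := exists_wordProd_eq hR hg
  induction l with
  | nil => exact hβ
  | cons j l ih =>
    rw [wordProd_cons, LinearEquiv.mul_apply]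
    exact s_apply_mem hR (hR.simple_mem j) (ih (wordProd_mem_weylGroup l))

/-- Since `Φ` is finite and spans `V`, a root `β` has at most one coroot: a second functional
`g` would make `γ ↦ γ + (g γ - f γ) • β` a translation preserving the finite set `Φ`. -/
theorem coroot_unique {β : R.V} (hβ : β ∈ R.Φ) {f g : Module.Dual ℚ R.V}
    (hf : f β = 2) (hg : g β = 2)
    (hfΦ : ∀ γ ∈ R.Φ, γ - f γ • β ∈ R.Φ) (hgΦ : ∀ γ ∈ R.Φ, γ - g γ • β ∈ R.Φ) :
    f = g := by
  refine LinearMap.ext_on hR.span_top fun γ hγ => ?_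
  by_contra hne
  set d := (g γ - f γ) • β with hd
  have hd0 : d ≠ 0 := smul_ne_zero (sub_ne_zero.mpr (Ne.symm hne)) (hR.ne_zero β hβ)
  have htrans : ∀ δ ∈ R.Φ, δ + (g δ - f δ) • β ∈ R.Φ := fun δ hδ => by
    convert hfΦ _ (hgΦ δ hδ) using 1
    simp only [map_sub, map_smul, smul_eq_mul, hf]
    module
  have hmem : ∀ n : ℕ, γ + (n : ℚ) • d ∈ R.Φ := by
    intro n
    induction n with
    | zero => simpa using hγ
    | succ n ih =>
      convert htrans _ ih using 1
      simp only [hd, map_add, map_smul, smul_eq_mul, hf, hg, Nat.cast_succ]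
      module
  refine Set.infinite_of_injective_forall_mem (fun m n hmn => ?_) hmem hR.finite
  exact_mod_cast smul_left_injective ℚ hd0 (add_left_cancel hmn)

theorem coroot_apply_apply {g : R.Aut} (hg : g ∈ R.weylGroup) {β : R.V} (hβ : β ∈ R.Φ)
    (x : R.V) : R.coroot (g β) (g x) = R.coroot β x := by
  have hgβ := weylGroup_apply_mem hR hg hβ
  have key : R.coroot (g β) = (R.coroot β).comp (g⁻¹ : R.Aut).toLinearMap := by
    refine coroot_unique hR hgβ (hR.coroot_self _ hgβ) ?_
      (hR.reflection_stable _ hgβ) fun γ hγ => ?_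
    · simpa using hR.coroot_self β hβ
    · have hγ' : g⁻¹ γ ∈ R.Φ := weylGroup_apply_mem hR (inv_mem hg) hγ
      convert weylGroup_apply_mem hR hg (hR.reflection_stable β hβ _ hγ') using 1
      simp
  rw [key]
  simp

theorem s_conj {g : R.Aut} (hg : g ∈ R.weylGroup) {β : R.V} (hβ : β ∈ R.Φ) :
    R.s (g β) = g * R.s β * g⁻¹ := by
  ext x
  have h := coroot_apply_apply hR hg hβ (g⁻¹ x)
  simp only [LinearEquiv.coe_inv, LinearEquiv.apply_symm_apply] at h
  simp [root_s_apply hR (weylGroup_apply_mem hR hg hβ), root_s_apply hR hβ, h]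

theorem S_apply_self (j : Fin R.r) : R.S j (R.α j) = -R.α j :=
  s_apply_self hR (hR.simple_mem j)

theorem neg_notMem_pos {β : R.V} (hβ : β ∈ R.pos) : -β ∉ R.pos :=
  ((hR.pos_or_neg β (hR.pos_subset hβ)).resolve_right fun h => h.1 hβ).2

theorem neg_mem_pos {β : R.V} (hβ : β ∈ R.Φ) (h : β ∉ R.pos) : -β ∈ R.pos :=
  ((hR.pos_or_neg β hβ).resolve_left fun h' => h h'.1).2

/-- `S j` fixes the coordinates of `γ` off `α_j`, so it cannot make all of them nonpositive
unless they all vanish. -/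
theorem S_apply_mem_pos {j : Fin R.r} {γ : R.V} (hγ : γ ∈ R.pos)
    (hne : ∀ q : ℚ, γ ≠ q • R.α j) : R.S j γ ∈ R.pos := by
  by_contra hneg
  obtain ⟨c, hc, hcγ⟩ := hR.pos_nonneg_comb γ hγ
  obtain ⟨e, he, heγ⟩ := hR.pos_nonneg_comb (-R.S j γ)
    (neg_mem_pos hR (s_apply_mem hR (hR.simple_mem j) (hR.pos_subset hγ)) hneg)
  have hzero : ∑ k, (c k + e k - if k = j then R.coroot (R.α j) γ else 0) • R.α k = 0 := by
    simp only [sub_smul, add_smul, Finset.sum_sub_distrib, Finset.sum_add_distrib, ite_smul,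
      zero_smul, Finset.sum_ite_eq', Finset.mem_univ, if_true, ← hcγ, ← heγ, S_apply hR]
    abel
  have hcoef := Fintype.linearIndependent_iff.mp hR.indep _ hzero
  refine hne (c j) ?_
  rw [hcγ, Finset.sum_eq_single j (fun k _ hk => ?_) (by simp)]
  have hk' := hcoef k
  rw [if_neg hk] at hk'
  rw [show c k = 0 by linarith [hc k, he k], zero_smul]

theorem s_eq_S_of_eq_smul {j : Fin R.r} {γ : R.V} (hγ : γ ∈ R.Φ) {q : ℚ}
    (hq : γ = q • R.α j) : R.s γ = R.S j := by
  have hq0 : q ≠ 0 := by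
    rintro rfl
    exact hR.ne_zero γ hγ (by simpa using hq)
  have hcor : R.coroot γ = q⁻¹ • R.coroot (R.α j) := by
    refine coroot_unique hR hγ (hR.coroot_self _ hγ) ?_ (hR.reflection_stable _ hγ)
      fun δ hδ => ?_
    · simp [hq, hR.coroot_self _ (hR.simple_mem j), hq0]
    · convert hR.reflection_stable _ (hR.simple_mem j) δ hδ using 2
      simp [hq, smul_smul, mul_right_comm _ _ q, inv_mul_cancel₀ hq0]
  ext x
  rw [S, root_s_apply hR hγ, root_s_apply hR (hR.simple_mem j), hcor, hq]
  simp [smul_smul, mul_right_comm _ _ q, inv_mul_cancel₀ hq0]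

theorem s_eq_S_of_S_apply_notMem_pos {j : Fin R.r} {γ : R.V} (hγ : γ ∈ R.pos)
    (hS : R.S j γ ∉ R.pos) : R.s γ = R.S j := by
  obtain ⟨q, hq⟩ : ∃ q : ℚ, γ = q • R.α j := by
    by_contra h
    exact hS (S_apply_mem_pos hR hγ fun q hq => h ⟨q, hq⟩)
  exact s_eq_S_of_eq_smul hR (hR.pos_subset hγ) hq

/-- The strong exchange condition. -/
theorem exists_s_mul_wordProd_eq_eraseIdx (l : List (Fin R.r)) {γ : R.V} (hγ : γ ∈ R.pos)
    (hl : (R.wordProd l)⁻¹ γ ∉ R.pos) :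
    ∃ t < l.length, R.s γ * R.wordProd l = R.wordProd (l.eraseIdx t) := by
  induction l generalizing γ with
  | nil => exact absurd hγ (by simpa [wordProd_nil] using hl)
  | cons j m ih =>
    by_cases hSγ : R.S j γ ∈ R.pos
    · have hm : (R.wordProd m)⁻¹ (R.S j γ) ∉ R.pos := by
        rwa [wordProd_cons, mul_inv_rev, S_inv hR, LinearEquiv.mul_apply] at hl
      obtain ⟨t, ht, heq⟩ := ih hSγ hm
      refine ⟨t + 1, by simpa using ht, ?_⟩
      rw [List.eraseIdx_cons_succ, wordProd_cons, wordProd_cons, ← heq,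
        s_conj hR (S_mem_weylGroup j) (hR.pos_subset hγ), S_inv hR]
      simp only [mul_assoc, S_mul_S_mul hR]
    · refine ⟨0, by simp, ?_⟩
      rw [List.eraseIdx_cons_zero, s_eq_S_of_S_apply_notMem_pos hR hγ hSγ, wordProd_cons,
        S_mul_S_mul hR]

theorem len_s_mul_lt {w : R.Aut} (hw : w ∈ R.weylGroup) {γ : R.V} (hγ : γ ∈ R.pos)
    (hneg : w⁻¹ γ ∉ R.pos) : R.len (R.s γ * w) < R.len w := by
  obtain ⟨l, hl, rfl⟩ := exists_reduced hR hw
  obtain ⟨t, ht, heq⟩ := exists_s_mul_wordProd_eq_eraseIdx hR l hγ hneg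
  rw [heq, hl]
  calc _ ≤ (l.eraseIdx t).length := len_wordProd_le _
    _ < l.length := by rw [List.length_eraseIdx_of_lt ht]; omega

theorem inv_apply_mem_pos_iff {v : R.Aut} (hv : v ∈ R.weylGroup) (j : Fin R.r) :
    v⁻¹ (R.α j) ∈ R.pos ↔ R.len v < R.len (R.S j * v) := by
  constructor
  · intro hpos
    have hneg : (R.S j * v)⁻¹ (R.α j) ∉ R.pos := by
      rw [mul_inv_rev, S_inv hR, LinearEquiv.mul_apply, S_apply_self hR, map_neg]
      exact neg_notMem_pos hR hpos
    have h := len_s_mul_lt hR (mul_mem (S_mem_weylGroup j) hv) (hR.simple_pos j) hneg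
    change R.len (R.S j * (R.S j * v)) < _ at h
    rwa [S_mul_S_mul hR] at h
  · intro hlt
    by_contra hneg
    exact (len_s_mul_lt hR hv (hR.simple_pos j) hneg).not_gt hlt

theorem reduced_cons_iff {j : Fin R.r} {m : List (Fin R.r)} :
    R.Reduced (j :: m) ↔ R.Reduced m ∧ (R.wordProd m)⁻¹ (R.α j) ∈ R.pos := by
  have hm := wordProd_mem_weylGroup m
  rw [inv_apply_mem_pos_iff hR hm, Reduced, Reduced, wordProd_cons, List.length_cons]
  have := len_S_mul_le hR hm j
  have := len_wordProd_le m
  omega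

theorem exists_shorter_sublist_of_not_reduced {l : List (Fin R.r)} (hl : ¬ R.Reduced l) :
    ∃ l' : List (Fin R.r), l'.Sublist l ∧ l'.length < l.length ∧
      R.wordProd l' = R.wordProd l := by
  induction l with
  | nil => exact absurd reduced_nil hl
  | cons j m ih =>
    by_cases hpos : (R.wordProd m)⁻¹ (R.α j) ∈ R.pos
    · have hm : ¬ R.Reduced m := fun hm => hl ((reduced_cons_iff hR).mpr ⟨hm, hpos⟩)
      obtain ⟨l', hsub, hlen, hprod⟩ := ih hm
      exact ⟨j :: l', hsub.cons_cons j, by simpa using hlen,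
        by rw [wordProd_cons, wordProd_cons, hprod]⟩
    · obtain ⟨t, ht, heq⟩ := exists_s_mul_wordProd_eq_eraseIdx hR m (hR.simple_pos j) hpos
      refine ⟨m.eraseIdx t, (List.eraseIdx_sublist m t).cons j, ?_, ?_⟩
      · rw [List.length_eraseIdx_of_lt ht, List.length_cons]
        omega
      · rw [← heq, wordProd_cons]
        rfl

theorem exists_reduced_sublist (l : List (Fin R.r)) :
    ∃ l' : List (Fin R.r), l'.Sublist l ∧ R.Reduced l' ∧ R.wordProd l' = R.wordProd l := by
  induction h : l.length using Nat.strong_induction_on generalizing l with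
  | _ n ih =>
    by_cases hl : R.Reduced l
    · exact ⟨l, List.Sublist.refl l, hl, rfl⟩
    · obtain ⟨l₁, hsub₁, hlen₁, hprod₁⟩ := exists_shorter_sublist_of_not_reduced hR hl
      obtain ⟨l', hsub, hred, hprod⟩ := ih _ (h ▸ hlen₁) l₁ rfl
      exact ⟨l', hsub.trans hsub₁, hred, hprod.trans hprod₁⟩

theorem exists_sublist_wordProd_eq_S_mul {a l : List (Fin R.r)} (ha : a.Sublist l)
    {j : Fin R.r} (hneg : (R.wordProd a)⁻¹ (R.α j) ∉ R.pos) :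
    ∃ a' : List (Fin R.r), a'.Sublist l ∧ R.wordProd a' = R.S j * R.wordProd a := by
  obtain ⟨t, _, heq⟩ := exists_s_mul_wordProd_eq_eraseIdx hR a (hR.simple_pos j) hneg
  exact ⟨a.eraseIdx t, (List.eraseIdx_sublist a t).trans ha, heq.symm⟩

theorem weylGroup_finite : (R.weylGroup : Set R.Aut).Finite := by
  have : Finite R.Φ := hR.finite.to_subtype
  refine Set.Finite.of_finite_image (f := fun (g : R.Aut) (β : R.Φ) => g β) ?_
    fun g _ g' _ h => ?_
  · refine (Set.Finite.pi (t := fun _ : R.Φ => R.Φ) fun _ => hR.finite).subset ?_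
    rintro _ ⟨g, hg, rfl⟩ β -
    exact weylGroup_apply_mem hR hg β.2
  · exact LinearEquiv.toLinearMap_injective
      (LinearMap.ext_on hR.span_top fun β hβ => congrFun h ⟨β, hβ⟩)

/-- Averaging a positive definite form over the finite group `W`. -/
theorem exists_invariant_form : ∃ B : LinearMap.BilinForm ℚ R.V,
    (∀ g ∈ R.weylGroup, ∀ x y, B (g x) (g y) = B x y) ∧ ∀ x, x ≠ 0 → 0 < B x x := by
  have : Module.Finite ℚ R.V := ⟨⟨hR.finite.toFinset, by simpa using hR.span_top⟩⟩
  have : Finite R.weylGroup := (weylGroup_finite hR).to_subtype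
  have : Fintype R.weylGroup := Fintype.ofFinite _
  let b := Module.finBasis ℚ R.V
  let B₀ : LinearMap.BilinForm ℚ R.V := ∑ k, (b.coord k).smulRight (b.coord k)
  have hB₀ : ∀ x, 0 ≤ B₀ x x ∧ (x ≠ 0 → 0 < B₀ x x) := by
    intro x
    simp only [B₀, LinearMap.coe_sum, Finset.sum_apply, LinearMap.coe_smulRight,
      LinearMap.smul_apply, smul_eq_mul]
    refine ⟨Finset.sum_nonneg fun k _ => mul_self_nonneg _, fun hx => ?_⟩
    obtain ⟨k, hk⟩ : ∃ k, b.coord k x ≠ 0 := by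
      by_contra! h
      exact hx (b.ext_elem fun k => by simpa using h k)
    exact Finset.sum_pos' (fun k _ => mul_self_nonneg _)
      ⟨k, Finset.mem_univ k, mul_self_pos.mpr hk⟩
  refine ⟨∑ g : R.weylGroup, B₀.compl₁₂ (g : R.Aut).toLinearMap (g : R.Aut).toLinearMap,
    fun g hg x y => ?_, fun x hx => ?_⟩
  · simp only [LinearMap.coe_sum, Finset.sum_apply, LinearMap.compl₁₂_apply,
      LinearEquiv.coe_coe]
    refine Fintype.sum_equiv (Equiv.mulRight ⟨g, hg⟩) _ _ fun g' => ?_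
    simp
  · simp only [LinearMap.coe_sum, Finset.sum_apply, LinearMap.compl₁₂_apply,
      LinearEquiv.coe_coe]
    exact Finset.sum_pos' (fun g _ => (hB₀ _).1)
      ⟨1, Finset.mem_univ _, (hB₀ x).2 hx⟩

end RootSystem

section InvariantForm

variable (hR : R.IsRootSystem) {B : LinearMap.BilinForm ℚ R.V}
  (hB : ∀ g ∈ R.weylGroup, ∀ x y, B (g x) (g y) = B x y)
include hR hB

theorem coroot_mul_form (j : Fin R.r) (x : R.V) :
    R.coroot (R.α j) x * B (R.α j) (R.α j) = 2 * B x (R.α j) := by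
  have h := hB _ (S_mem_weylGroup j) x (R.α j)
  rw [S_apply_self hR, S_apply hR] at h
  simp only [map_neg, map_sub, map_smul, LinearMap.sub_apply, LinearMap.smul_apply,
    smul_eq_mul] at h
  linarith

theorem form_nonneg_of_dominant (hBpos : ∀ x, x ≠ 0 → 0 < B x x) {lam : R.V}
    (hdom : R.Dominant lam) {γ : R.V} (hγ : γ ∈ R.pos) : 0 ≤ B lam γ := by
  obtain ⟨c, hc, rfl⟩ := hR.pos_nonneg_comb γ hγ
  simp only [map_sum, map_smul, smul_eq_mul]
  refine Finset.sum_nonneg fun k _ => mul_nonneg (hc k) ?_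
  have h := coroot_mul_form hR hB k lam
  have hα := hBpos _ (hR.ne_zero _ (hR.simple_mem k))
  nlinarith [hdom k]

end InvariantForm

theorem coroot_apply_nonneg (hR : R.IsRootSystem) {lam : R.V} (hdom : R.Dominant lam)
    {v : R.Aut} (hv : v ∈ R.weylGroup) {i : Fin R.r} (hpos : v⁻¹ (R.α i) ∈ R.pos) :
    0 ≤ R.coroot (R.α i) (v lam) := by
  obtain ⟨B, hB, hBpos⟩ := exists_invariant_form hR
  have hcor := coroot_mul_form hR hB i (v lam)
  have hinv : B (v lam) (R.α i) = B lam (v⁻¹ (R.α i)) := by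
    simpa using hB v hv lam (v⁻¹ (R.α i))
  have hnonneg := form_nonneg_of_dominant hR hB hBpos hdom hpos
  have hα := hBpos _ (hR.ne_zero _ (hR.simple_mem i))
  nlinarith

end RootData

/-- The Bruhat order generated by the edges `x → s_γ x` of the Bruhat graph; the condition
`x⁻¹ γ > 0` says that the edge increases the length. -/
inductive RootData.BruhatGraphLE (R : RootData) : R.Aut → R.Aut → Prop
  | refl (u : R.Aut) : R.BruhatGraphLE u u
  | step {u x : R.Aut} {γ : R.V} :
      R.BruhatGraphLE u x → γ ∈ R.pos → x⁻¹ γ ∈ R.pos → R.BruhatGraphLE u (R.s γ * x)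

namespace RootData.BruhatGraphLE

variable {R : RootData}

theorem trans {u v w : R.Aut} (h₁ : R.BruhatGraphLE u v) (h₂ : R.BruhatGraphLE v w) :
    R.BruhatGraphLE u w := by
  induction h₂ with
  | refl => exact h₁
  | step _ hγ hx ih => exact ih.step hγ hx

variable (hR : R.IsRootSystem)
include hR

theorem exists_sublist {u w : R.Aut} (h : R.BruhatGraphLE u w) {n : List (Fin R.r)}
    (hn : R.wordProd n = w) : ∃ n' : List (Fin R.r), n'.Sublist n ∧ R.wordProd n' = u := by
  induction h generalizing n with
  | refl => exact ⟨n, List.Sublist.refl n, hn⟩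
  | @step x γ _ hγ hx ih =>
    have hγΦ := hR.pos_subset hγ
    have hneg : (R.wordProd n)⁻¹ γ ∉ R.pos := by
      rw [hn, mul_inv_rev, s_inv hR hγΦ, LinearEquiv.mul_apply, s_apply_self hR hγΦ, map_neg]
      exact neg_notMem_pos hR hx
    obtain ⟨t, -, heq⟩ := exists_s_mul_wordProd_eq_eraseIdx hR n hγ hneg
    rw [hn, ← mul_assoc, s_mul_self hR hγΦ, one_mul] at heq
    obtain ⟨n₂, hsub₂, -, hprod₂⟩ := exists_reduced_sublist hR (n.eraseIdx t)
    obtain ⟨n', hsub', hprod'⟩ := ih (hprod₂.trans heq.symm)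
    exact ⟨n', hsub'.trans (hsub₂.trans (List.eraseIdx_sublist n t)), hprod'⟩

theorem S_mul_step {x : R.Aut} {γ : R.V} (hγ : γ ∈ R.pos) (hx : x⁻¹ γ ∈ R.pos) (j : Fin R.r) :
    R.S j * x = R.s γ * x ∨ R.BruhatGraphLE (R.S j * x) (R.S j * (R.s γ * x)) := by
  by_cases hSγ : R.S j γ ∈ R.pos
  · right
    have h := (refl (R.S j * x)).step hSγ (by simpa using hx)
    rwa [s_conj hR (S_mem_weylGroup j) (hR.pos_subset hγ), S_inv hR, mul_assoc,
      S_mul_S_mul hR, mul_assoc] at h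
  · left
    rw [s_eq_S_of_S_apply_notMem_pos hR hγ hSγ]

theorem S_mul {u w : R.Aut} (h : R.BruhatGraphLE u w) (j : Fin R.r) :
    R.BruhatGraphLE (R.S j * u) w ∨ R.BruhatGraphLE (R.S j * u) (R.S j * w) := by
  induction h with
  | refl => exact Or.inr (refl _)
  | @step x γ _ hγ hx ih =>
    have hxw : R.BruhatGraphLE x (R.s γ * x) := (refl x).step hγ hx
    rcases ih with ih | ih
    · exact Or.inl (ih.trans hxw)
    · rcases S_mul_step hR hγ hx j with heq | hstep
      · exact Or.inl (heq ▸ ih)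
      · exact Or.inr (ih.trans hstep)

theorem of_sublist {n n' : List (Fin R.r)} (hn : R.Reduced n) (hsub : n'.Sublist n) :
    R.BruhatGraphLE (R.wordProd n') (R.wordProd n) := by
  induction n generalizing n' with
  | nil =>
    rw [List.sublist_nil.mp hsub]
    exact refl _
  | cons j m ih =>
    obtain ⟨hm, hpos⟩ := (reduced_cons_iff hR).mp hn
    have hup : R.BruhatGraphLE (R.wordProd m) (R.S j * R.wordProd m) :=
      (refl _).step (hR.simple_pos j) hpos
    rw [wordProd_cons]
    rcases List.sublist_cons_iff.mp hsub with hsub | ⟨a, rfl, ha⟩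
    · exact (ih hm hsub).trans hup
    · rw [wordProd_cons]
      exact ((ih hm ha).S_mul hR j).elim (·.trans hup) id

end RootData.BruhatGraphLE

namespace RootData.BruhatLE

variable {R : RootData}

theorem left_mem {u w : R.Aut} (h : R.BruhatLE u w) : u ∈ R.weylGroup := by
  obtain ⟨-, -, -, l', -, rfl⟩ := h
  exact wordProd_mem_weylGroup l'

theorem right_mem {u w : R.Aut} (h : R.BruhatLE u w) : w ∈ R.weylGroup := by
  obtain ⟨l, -, rfl, -⟩ := h
  exact wordProd_mem_weylGroup l

variable (hR : R.IsRootSystem)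
include hR

/-- The subword property holds for every word of `w`, not only for the reduced word
that witnesses `u ≤ w`. -/
theorem exists_sublist {u w : R.Aut} (h : R.BruhatLE u w) {n : List (Fin R.r)}
    (hn : R.wordProd n = w) : ∃ n' : List (Fin R.r), n'.Sublist n ∧ R.wordProd n' = u := by
  obtain ⟨l, hl, rfl, l', hsub, rfl⟩ := h
  exact (BruhatGraphLE.of_sublist hR hl hsub).exists_sublist hR hn

theorem of_le_S_mul {v w : R.Aut} {i : Fin R.r} (hv : R.BruhatLE v (R.S i * w))
    (hlen : R.len (R.S i * w) + 1 = R.len w) : R.BruhatLE v w := by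
  obtain ⟨m, hm, hmw, m', hsub, rfl⟩ := hv
  have hw : R.wordProd (i :: m) = w := by rw [wordProd_cons, hmw, S_mul_S_mul hR]
  refine ⟨i :: m, ?_, hw, m', hsub.trans (List.sublist_cons_self i m), rfl⟩
  rw [Reduced, hw, List.length_cons, ← hm, hmw, hlen]

theorem S_mul_lift {u w : R.Aut} (hu : R.BruhatLE u w) (i : Fin R.r) :
    R.BruhatLE u (R.S i * w) ∨
      ∃ v, R.BruhatLE v (R.S i * w) ∧ v⁻¹ (R.α i) ∈ R.pos ∧ u = R.S i * v := by
  obtain ⟨r, hr, hrw⟩ := exists_reduced hR (mul_mem (S_mem_weylGroup i) hu.right_mem)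
  obtain ⟨n', hsub, rfl⟩ :=
    hu.exists_sublist hR (n := i :: r) (by rw [wordProd_cons, hrw, S_mul_S_mul hR])
  rcases List.sublist_cons_iff.mp hsub with hsub | ⟨a, rfl, ha⟩
  · exact Or.inl ⟨r, hr, hrw, n', hsub, rfl⟩
  · rw [wordProd_cons]
    by_cases hpos : (R.wordProd a)⁻¹ (R.α i) ∈ R.pos
    · exact Or.inr ⟨_, ⟨r, hr, hrw, a, ha, rfl⟩, hpos, rfl⟩
    · obtain ⟨a', hsub', hprod⟩ := exists_sublist_wordProd_eq_S_mul hR ha hpos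
      exact Or.inl ⟨r, hr, hrw, a', hsub', hprod⟩

end RootData.BruhatLE

namespace RootData

variable {R : RootData} (hR : R.IsRootSystem)
include hR

theorem demPolytope_S_mul_subset {lam : R.V} {w : R.Aut} {i : Fin R.r}
    (hlen : R.len (R.S i * w) + 1 = R.len w) :
    R.demPolytope lam (R.S i * w) ⊆ R.demPolytope lam w :=
  convexHull_mono fun _ ⟨u, huW, hu, hm⟩ => ⟨u, huW, hu.of_le_S_mul hR hlen, hm⟩

theorem demPolytope_subset_sub_ray {lam : R.V} (hdom : R.Dominant lam) (w : R.Aut)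
    (i : Fin R.r) : R.demPolytope lam w ⊆
      {x | ∃ p ∈ R.demPolytope lam (R.S i * w), ∃ c : ℚ, 0 ≤ c ∧ x = p - c • R.α i} := by
  refine convexHull_min ?_ ((convex_convexHull ℚ _).sub_ray _)
  rintro _ ⟨u, -, hu, rfl⟩
  rcases hu.S_mul_lift hR i with hu | ⟨v, hv, hpos, rfl⟩
  · exact ⟨u lam, subset_convexHull ℚ _ ⟨u, hu.left_mem, hu, rfl⟩, 0, le_rfl, by simp⟩
  · exact ⟨v lam, subset_convexHull ℚ _ ⟨v, hv.left_mem, hv, rfl⟩, _,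
      coroot_apply_nonneg hR hdom hv.left_mem hpos, by rw [LinearEquiv.mul_apply, S_apply hR]⟩

end RootData

theorem statement19_general (R : RootData) (hR : R.IsRootSystem)
    (lam : R.V) (hdom : R.Dominant lam)
    (w : R.Aut) (i : Fin R.r)
    (hlen : R.len (R.S i * w) + 1 = R.len w)
    (mu' : R.V) (hmem : mu' ∈ R.demPolytope lam w)
    (hmax : ∀ k : ℚ, mu' + k • R.α i ∈ R.demPolytope lam w → k ≤ 0) :
    mu' ∈ R.demPolytope lam (R.S i * w) ∧
      ∀ k : ℚ, mu' + k • R.α i ∈ R.demPolytope lam (R.S i * w) → k ≤ 0 := by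
  have hsub := RootData.demPolytope_S_mul_subset hR (lam := lam) hlen
  obtain ⟨p, hp, c, hc, rfl⟩ := RootData.demPolytope_subset_sub_ray hR hdom w i hmem
  obtain rfl : c = 0 := le_antisymm (hmax c (by rw [sub_add_cancel]; exact hsub hp)) hc
  rw [zero_smul, sub_zero] at hmax ⊢
  exact ⟨hp, fun k hk => hmax k (hsub hk)⟩

theorem statement19 (R : RootData) (hR : R.IsRootSystem)
    (lam : R.V) (hdom : R.Dominant lam)
    (w : R.Aut) (hw : w ∈ R.weylGroup) (i : Fin R.r)
    (hlen : R.len (R.S i * w) + 1 = R.len w)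
    (mu' : R.V) (hmem : mu' ∈ R.demPolytope lam w)
    (hmax : ∀ k : ℚ, mu' + k • R.α i ∈ R.demPolytope lam w → k ≤ 0) :
    mu' ∈ R.demPolytope lam (R.S i * w) ∧
      ∀ k : ℚ, mu' + k • R.α i ∈ R.demPolytope lam (R.S i * w) → k ≤ 0 :=
  statement19_general R hR lam hdom w i hlen mu' hmem hmax
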